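/- arXiv:1203.5082 — 2 statements merged into one kernel-verified Lean document; each statement's English description precedes it below -/
import Mathlib

section
/- For any connected closed 4-coloured graph 𝒢 and any two distinct colours ℓ, ℓ' ∈ {1,2,3,4}, one has |B_{ℓ'}| + |B_ℓ| − Σ_{b∈B_ℓ} |V_b(ℓ')| ≤ 1. -/
/-!
The bubbles of colour `ℓ` and of colour `ℓ'` are the vertices of a bipartite multigraph
whose edges are the components with colours `{ℓ, ℓ'}ᶜ`, each joining the two bubbles
containing it; the sum on the right counts exactly these edges. Every line of `𝒢` has a
colour different from `ℓ` or from `ℓ'`, so it stays inside a bubble of one of the two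
colours, and connectedness of `𝒢` makes this multigraph connected. A connected graph has
at most one more vertex than it has edges.
-/

/-- A closed `k`-coloured graph: a finite bipartite `k`-regular graph whose lines carry
colours in `Fin k`, each node meeting exactly one line of each colour.  It is encoded by a
finite node set together with, for each colour, a fixed-point-free involutive pairing
(perfect matching) exchanging the two node classes (`sign`). -/
structure ColouredGraph (k : ℕ) where
  /-- the nodes of the graph -/
  V : Type
  fintypeV : Fintype V
  /-- the bipartition of the nodes (black/white) -/
  sign : V → Bool
  /-- `adj c v` is the node joined to `v` by the line of colour `c` at `v` -/
  adj : Fin k → V → V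
  adj_invol : ∀ c, Function.Involutive (adj c)
  adj_ne : ∀ c v, adj c v ≠ v
  adj_sign : ∀ c v, sign (adj c v) = ! sign v

namespace ColouredGraph

variable {k : ℕ} (G : ColouredGraph k)

instance : Fintype G.V := G.fintypeV

/-- One step along a line whose colour lies in `S`. -/
def Step (S : Set (Fin k)) (v w : G.V) : Prop := ∃ c ∈ S, G.adj c v = w

/-- Reachability using only lines whose colours lie in `S`. -/
def Reach (S : Set (Fin k)) : G.V → G.V → Prop := Relation.ReflTransGen (G.Step S)

/-- The connected components of the subgraph of `G` formed by the lines whose colours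
lie in `S`.  For `S = {ℓ}ᶜ` these are the bubbles of colour `ℓ`; for a pair
`S = {i,j}` these are the faces of colours `(ij)` (bicoloured cycles); for a triple these
are the subgraphs dual to simplicial edges (in 4d). -/
def Component (S : Set (Fin k)) : Type := Quot (G.Reach S)

instance (S : Set (Fin k)) : Finite (G.Component S) := Quot.finite _

/-- The number of connected components of the subgraph with colours in `S`. -/
noncomputable def numComponents (S : Set (Fin k)) : ℕ := Nat.card (G.Component S)

/-- `G` is connected. -/
def Connected : Prop := ∀ v w : G.V, G.Reach Set.univ v w

/-- The number of nodes of `G` lying in the component `b`. -/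
noncomputable def nodesIn (S : Set (Fin k)) (b : G.Component S) : ℕ :=
  Nat.card {v : G.V // Quot.mk (G.Reach S) v = b}

/-- The component `x` of the subgraph with colours in `S'` lies inside the component
`b` of the subgraph with colours in `S` (intended for `S' ⊆ S`). -/
def MemIn {S S' : Set (Fin k)} (x : G.Component S') (b : G.Component S) : Prop :=
  ∃ v : G.V, Quot.mk (G.Reach S') v = x ∧ Quot.mk (G.Reach S) v = b

/-- The number of components of the subgraph with colours in `S'` contained in the
component `b` of the subgraph with colours in `S` (intended for `S' ⊆ S`). -/
noncomputable def countIn (S S' : Set (Fin k)) (b : G.Component S) : ℕ :=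
  Nat.card {x : G.Component S' // G.MemIn x b}

/-- The lines of the subgraph with colours in `S` lying in the component `b`: pairs
`(v, c)` with `c ∈ S` and `v` a node of `b`, two such pairs being identified when they
describe the same line. -/
def LineIn (S : Set (Fin k)) (b : G.Component S) : Type :=
  Quot (fun p q : {x : G.V × Fin k // x.2 ∈ S ∧ Quot.mk (G.Reach S) x.1 = b} =>
    p.1.2 = q.1.2 ∧ (q.1.1 = p.1.1 ∨ q.1.1 = G.adj p.1.2 p.1.1))

instance (S : Set (Fin k)) (b : G.Component S) : Finite (G.LineIn S b) := Quot.finite _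

/-- The number of lines of the component `b` of the subgraph with colours in `S`. -/
noncomputable def linesIn (S : Set (Fin k)) (b : G.Component S) : ℕ :=
  Nat.card (G.LineIn S b)

/-- The lines of `G`: pairs `(v, c)`, identified when describing the same line. -/
def Line : Type :=
  Quot (fun p q : G.V × Fin k =>
    p.2 = q.2 ∧ (q.1 = p.1 ∨ q.1 = G.adj p.2 p.1))

instance : Finite G.Line := Quot.finite _

/-- The number of lines of `G` (equal to `k·𝒩/2`). -/
noncomputable def numLines : ℕ := Nat.card G.Line


end ColouredGraph


namespace SimpleGraph

variable {A B Z : Type*}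

/-- The simple graph on `A ⊕ B` underlying the bipartite multigraph with an edge
`p z — q z` for each `z : Z`. -/
def incidenceGraph (p : Z → A) (q : Z → B) : SimpleGraph (A ⊕ B) :=
  fromRel fun x y => ∃ z, x = .inl (p z) ∧ y = .inr (q z)

lemma incidenceGraph_adj_inl_inr (p : Z → A) (q : Z → B) (z : Z) :
    (incidenceGraph p q).Adj (.inl (p z)) (.inr (q z)) :=
  (fromRel_adj _ _ _).2 ⟨Sum.inl_ne_inr, .inl ⟨z, rfl, rfl⟩⟩

lemma card_add_card_le_card_add_one_of_preconnected [Finite A] [Finite B] [Finite Z]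
    {p : Z → A} {q : Z → B} (hpq : (incidenceGraph p q).Preconnected) :
    Nat.card A + Nat.card B ≤ Nat.card Z + 1 := by
  rw [← Nat.card_sum]
  cases isEmpty_or_nonempty (A ⊕ B)
  · simp
  have hsurj : Function.Surjective fun z : Z =>
      (⟨s(.inl (p z), .inr (q z)), incidenceGraph_adj_inl_inr p q z⟩ :
        (incidenceGraph p q).edgeSet) := by
    rintro ⟨e, he⟩
    induction e using Sym2.ind with
    | _ x y =>
      obtain ⟨-, ⟨z, rfl, rfl⟩ | ⟨z, rfl, rfl⟩⟩ :=
        (fromRel_adj _ _ _).1 ((mem_edgeSet _).1 he)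
      · exact ⟨z, rfl⟩
      · exact ⟨z, Subtype.ext Sym2.eq_swap⟩
  calc Nat.card (A ⊕ B) ≤ Nat.card (incidenceGraph p q).edgeSet + 1 :=
        (Connected.mk hpq).card_vert_le_card_edgeSet_add_one
    _ ≤ Nat.card Z + 1 := by gcongr; exact Nat.card_le_card_of_surjective _ hsurj

end SimpleGraph

namespace ColouredGraph

open SimpleGraph

variable {k : ℕ} (G : ColouredGraph k) {S T U : Set (Fin k)}

lemma reach_mono (h : U ⊆ S) {v w : G.V} (hvw : G.Reach U v w) : G.Reach S v w :=
  Relation.ReflTransGen.mono (fun _ _ ⟨c, hc, hcvw⟩ => ⟨c, h hc, hcvw⟩) _ _ hvw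

lemma reach_adj {c : Fin k} (hc : c ∈ S) (v : G.V) : G.Reach S v (G.adj c v) :=
  .single ⟨c, hc, rfl⟩

def componentMap (h : U ⊆ S) : G.Component U → G.Component S :=
  Quot.lift (Quot.mk _) fun _ _ hvw => Quot.sound (G.reach_mono h hvw)

lemma memIn_iff_componentMap_eq (h : U ⊆ S) (x : G.Component U) (b : G.Component S) :
    G.MemIn x b ↔ G.componentMap h x = b := by
  constructor
  · rintro ⟨v, rfl, rfl⟩
    rfl
  · rintro rfl
    obtain ⟨v, rfl⟩ := Quot.exists_rep x
    exact ⟨v, rfl, rfl⟩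

lemma finsum_countIn (h : U ⊆ S) :
    ∑ᶠ b : G.Component S, G.countIn S U b = G.numComponents U := by
  have := Fintype.ofFinite (G.Component S)
  rw [finsum_eq_sum_of_fintype, numComponents,
    ← Nat.card_congr (Equiv.sigmaFiberEquiv (G.componentMap h)), Nat.card_sigma]
  exact Finset.sum_congr rfl fun b _ =>
    Nat.card_congr (Equiv.subtypeEquivRight fun x => G.memIn_iff_componentMap_eq h x b)

lemma preconnected_incidenceGraph_componentMap (hG : G.Connected) (hS : U ⊆ S)
    (hT : U ⊆ T) (hST : ∀ c, c ∈ S ∨ c ∈ T) :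
    (incidenceGraph (G.componentMap hS) (G.componentMap hT)).Preconnected := by
  set H := incidenceGraph (G.componentMap hS) (G.componentMap hT)
  have hbridge (v : G.V) : H.Adj (.inl (Quot.mk _ v)) (.inr (Quot.mk _ v)) :=
    incidenceGraph_adj_inl_inr _ _ (Quot.mk _ v)
  have hreach (v w : G.V) : H.Reachable (.inl (Quot.mk _ v)) (.inl (Quot.mk _ w)) := by
    induction hG v w with
    | refl => rfl
    | @tail u w _ hstep ih =>
      obtain ⟨c, -, rfl⟩ := hstep
      rcases hST c with hc | hc
      · rwa [← Quot.sound (G.reach_adj hc u)]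
      · refine ih.trans <| (hbridge u).reachable.trans ?_
        rw [Quot.sound (G.reach_adj hc u)]
        exact (hbridge _).symm.reachable
  have hrep (x : G.Component S ⊕ G.Component T) :
      ∃ v : G.V, H.Reachable x (.inl (Quot.mk _ v)) := by
    rcases x with a | b
    · obtain ⟨v, rfl⟩ := Quot.exists_rep a
      exact ⟨v, .refl _⟩
    · obtain ⟨v, rfl⟩ := Quot.exists_rep b
      exact ⟨v, (hbridge v).symm.reachable⟩
  intro x y
  obtain ⟨v, hx⟩ := hrep x
  obtain ⟨w, hy⟩ := hrep y
  exact hx.trans ((hreach v w).trans hy.symm)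

end ColouredGraph

open ColouredGraph in
/-- for any connected closed 4-coloured graph `𝒢` and any two distinct
colours `ℓ, ℓ'` one has `|B_{ℓ'}| + |B_ℓ| − Σ_{b∈B_ℓ} |V_b(ℓ')| ≤ 1`.  Here `B_ℓ` is
the set of bubbles of colour `ℓ` (components after deleting the lines of colour `ℓ`) and
`V_b(ℓ')` is the set of vertices of colour `ℓ'` of the bubble `b`, i.e. the bicoloured
faces of `b` whose colour pair is `{1,2,3,4} ∖ {ℓ,ℓ'}`. -/
theorem bubble_vertex_inequality_3d (G : ColouredGraph 4) (hG : G.Connected)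
    (ℓ ℓ' : Fin 4) (h : ℓ ≠ ℓ') :
    G.numComponents {ℓ'}ᶜ + G.numComponents {ℓ}ᶜ
      ≤ 1 + ∑ᶠ b : G.Component {ℓ}ᶜ, G.countIn {ℓ}ᶜ ({ℓ, ℓ'}ᶜ) b := by
  have hS : ({ℓ, ℓ'}ᶜ : Set (Fin 4)) ⊆ {ℓ}ᶜ := by simp
  have hT : ({ℓ, ℓ'}ᶜ : Set (Fin 4)) ⊆ {ℓ'}ᶜ := by simp
  have hST (c : Fin 4) : c ∈ ({ℓ}ᶜ : Set (Fin 4)) ∨ c ∈ ({ℓ'}ᶜ : Set (Fin 4)) := by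
    by_cases hc : c = ℓ <;> simp_all
  rw [G.finsum_countIn hS, add_comm, add_comm 1]
  exact SimpleGraph.card_add_card_le_card_add_one_of_preconnected
    (G.preconnected_incidenceGraph_componentMap hG hS hT hST)
end

section
/- For any closed 5-coloured graph 𝒢 with 𝒩 nodes and any colour ℓ, the sum of the degrees of the bubbles of colour ℓ satisfies Σ_{b∈B_ℓ} ω(b) = 3|B_ℓ| + (3𝒩)/2 − Σ_{b∈B_ℓ} |E_b|, where E_b is the set of edges of the 3-dimensional complex dual to the bubble b (the bicoloured faces of b). -/
namespace ColouredGraph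

variable {k : ℕ} (G : ColouredGraph k)

variable (G : ColouredGraph 5)

/-- The genus of the jacket of a bubble `b` of colour `ℓ` of a closed 5-coloured graph
labelled by a cyclic permutation `σ` of the four colours `≠ ℓ` (the jacket `(σ, σ⁻¹)`),
defined by the Euler relation `2 − 2 g_J = |F_J| − |E_J| + |V_J|`: the faces of the
jacket are the nodes of `b`, its edges the lines of `b`, and its vertices the bicoloured
faces of `b` of the consecutive colour pairs `{c, σ c}`, `c ≠ ℓ`. -/
noncomputable def bubbleJacketGenus (ℓ : Fin 5) (σ : Equiv.Perm (Fin 5))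
    (b : G.Component {ℓ}ᶜ) : ℚ :=
  1 - ((∑ᶠ c ∈ ({ℓ}ᶜ : Set (Fin 5)), (G.countIn {ℓ}ᶜ {c, σ c} b : ℚ))
      - (G.linesIn {ℓ}ᶜ b : ℚ) + (G.nodesIn {ℓ}ᶜ b : ℚ)) / 2

/-- The degree `ω(b)` of a bubble `b` of colour `ℓ`: the sum of the genera of its three
jackets.  Each jacket is labelled by a pair `(σ, σ⁻¹)` of mutually inverse cyclic
permutations of the four colours `≠ ℓ`, so the sum over the three jackets is half the
sum over the six such cyclic permutations. -/
noncomputable def bubbleDegree (ℓ : Fin 5) (b : G.Component {ℓ}ᶜ) : ℚ :=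
  (∑ᶠ σ ∈ {σ : Equiv.Perm (Fin 5) | σ.IsCycle ∧ σ.support = ({ℓ}ᶜ : Finset (Fin 5))},
    G.bubbleJacketGenus ℓ σ b) / 2

/-- The number `|E_b|` of edges of the 3-dimensional complex dual to a bubble `b` of
colour `ℓ` of a closed 5-coloured graph: the bicoloured faces of `b`, i.e. the
components of the subgraphs of `b` with colour pairs `{i,j} ⊆ {ℓ}ᶜ`. -/
noncomputable def bubbleEdgeCount (ℓ : Fin 5) (b : G.Component {ℓ}ᶜ) : ℕ :=
  ∑ᶠ P ∈ {P : Finset (Fin 5) | P.card = 2 ∧ ℓ ∉ P}, G.countIn {ℓ}ᶜ (↑P) b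

end ColouredGraph



section Aux

open Equiv

lemma isCycle_iff_sq (σ : Equiv.Perm (Fin 5)) (h : σ.support.card = 4) :
    σ.IsCycle ↔ σ * σ ≠ 1 := by
  constructor
  · intro hc h1
    have ho := hc.orderOf
    rw [h] at ho
    have hd : orderOf σ ∣ 2 := orderOf_dvd_of_pow_eq_one (by rw [pow_two]; exact h1)
    rw [ho] at hd
    norm_num at hd
  · intro h1
    by_contra hc
    apply h1
    have hne : σ ≠ 1 := by
      intro hs; rw [hs] at h; simp at h
    have hct : σ.cycleType.sum = 4 := by rw [Equiv.Perm.sum_cycleType, h]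
    have hcard1 : Multiset.card σ.cycleType ≠ 1 := fun heq =>
      hc (Equiv.Perm.card_cycleType_eq_one.mp heq)
    have hdvd : ∀ x ∈ σ.cycleType, x ∣ 2 := by
      intro x hx
      obtain ⟨t, ht⟩ := Multiset.exists_cons_of_mem hx
      have h2x : 2 ≤ x := Equiv.Perm.two_le_of_mem_cycleType hx
      have htne : t ≠ 0 := by
        intro h0
        apply hcard1
        rw [ht, h0, Multiset.card_cons, Multiset.card_zero]
      obtain ⟨y, hy⟩ := Multiset.exists_mem_of_ne_zero htne
      have h2y : 2 ≤ y := Equiv.Perm.two_le_of_mem_cycleType (ht ▸ Multiset.mem_cons_of_mem hy)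
      have hyts : y ≤ t.sum := Multiset.single_le_sum (fun _ _ => Nat.zero_le _) y hy
      have hxts : x + t.sum = 4 := by rw [ht, Multiset.sum_cons] at hct; omega
      have : x = 2 := by omega
      rw [this]
    have hd : orderOf σ ∣ 2 := by
      rw [← Equiv.Perm.lcm_cycleType]
      exact Multiset.lcm_dvd.mpr hdvd
    have h2 : σ ^ 2 = 1 := orderOf_dvd_iff_pow_eq_one.mp hd
    rwa [pow_two] at h2

lemma cast_finsum_mem {ι : Type*} (s : Set ι) (hs : s.Finite) (f : ι → ℕ) :
    ((∑ᶠ i ∈ s, f i : ℕ) : ℚ) = ∑ᶠ i ∈ s, (f i : ℚ) := by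
  have h : s = ↑hs.toFinset := (Set.Finite.coe_toFinset hs).symm
  rw [h, finsum_mem_coe_finset, finsum_mem_coe_finset, Nat.cast_sum]

set_option maxRecDepth 40000 in
set_option maxHeartbeats 1000000 in
lemma key_case_0 (X : Set (Fin 5) → ℚ) (v : ℚ) :
    (∑ᶠ σ ∈ {σ : Equiv.Perm (Fin 5) | σ.support = ({(0:Fin 5)}ᶜ : Finset (Fin 5)) ∧ σ * σ ≠ 1},
      (1 - ((∑ᶠ c ∈ ({(0:Fin 5)}ᶜ : Set (Fin 5)), X {c, σ c}) - 2*v + v)/2)) / 2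
    = 3 + 3*v/2 - ∑ᶠ P ∈ {P : Finset (Fin 5) | P.card = 2 ∧ (0:Fin 5) ∉ P}, X ↑P := by
  have hC : {σ : Equiv.Perm (Fin 5) | σ.support = ({(0:Fin 5)}ᶜ : Finset (Fin 5)) ∧ σ * σ ≠ 1}
      = ↑({c[1,2,3,4], c[1,2,4,3], c[1,3,2,4], c[1,3,4,2], c[1,4,2,3], c[1,4,3,2]} : Finset (Equiv.Perm (Fin 5))) := by
    ext σ
    simp only [Set.mem_setOf_eq, Finset.mem_coe]
    revert σ
    decide
  have hF : ({(0:Fin 5)}ᶜ : Set (Fin 5)) = ↑({1,2,3,4} : Finset (Fin 5)) := by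
    ext x
    simp only [Set.mem_compl_iff, Set.mem_singleton_iff, Finset.coe_insert,
      Set.mem_insert_iff, Finset.coe_singleton]
    revert x
    decide
  have hPs : {P : Finset (Fin 5) | P.card = 2 ∧ (0:Fin 5) ∉ P}
      = ↑({{1,2}, {1,3}, {1,4}, {2,3}, {2,4}, {3,4}} : Finset (Finset (Fin 5))) := by
    ext P
    simp only [Set.mem_setOf_eq, Finset.mem_coe]
    revert P
    decide
  rw [hC, hPs, finsum_mem_coe_finset, finsum_mem_coe_finset]
  simp only [hF, finsum_mem_coe_finset]
  rw [Finset.sum_insert (by decide : (c[1,2,3,4] : Equiv.Perm (Fin 5)) ∉ ({c[1,2,4,3], c[1,3,2,4], c[1,3,4,2], c[1,4,2,3], c[1,4,3,2]} : Finset (Equiv.Perm (Fin 5)))),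
    Finset.sum_insert (by decide : (c[1,2,4,3] : Equiv.Perm (Fin 5)) ∉ ({c[1,3,2,4], c[1,3,4,2], c[1,4,2,3], c[1,4,3,2]} : Finset (Equiv.Perm (Fin 5)))),
    Finset.sum_insert (by decide : (c[1,3,2,4] : Equiv.Perm (Fin 5)) ∉ ({c[1,3,4,2], c[1,4,2,3], c[1,4,3,2]} : Finset (Equiv.Perm (Fin 5)))),
    Finset.sum_insert (by decide : (c[1,3,4,2] : Equiv.Perm (Fin 5)) ∉ ({c[1,4,2,3], c[1,4,3,2]} : Finset (Equiv.Perm (Fin 5)))),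
    Finset.sum_insert (by decide : (c[1,4,2,3] : Equiv.Perm (Fin 5)) ∉ ({c[1,4,3,2]} : Finset (Equiv.Perm (Fin 5)))),
    Finset.sum_singleton]
  rw [Finset.sum_insert (by decide : ({1,2} : Finset (Fin 5)) ∉ ({{1,3}, {1,4}, {2,3}, {2,4}, {3,4}} : Finset (Finset (Fin 5)))),
    Finset.sum_insert (by decide : ({1,3} : Finset (Fin 5)) ∉ ({{1,4}, {2,3}, {2,4}, {3,4}} : Finset (Finset (Fin 5)))),
    Finset.sum_insert (by decide : ({1,4} : Finset (Fin 5)) ∉ ({{2,3}, {2,4}, {3,4}} : Finset (Finset (Fin 5)))),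
    Finset.sum_insert (by decide : ({2,3} : Finset (Fin 5)) ∉ ({{2,4}, {3,4}} : Finset (Finset (Fin 5)))),
    Finset.sum_insert (by decide : ({2,4} : Finset (Fin 5)) ∉ ({{3,4}} : Finset (Finset (Fin 5)))),
    Finset.sum_singleton]
  simp only [Finset.sum_insert (by decide : (1 : Fin 5) ∉ ({2,3,4} : Finset (Fin 5))),
    Finset.sum_insert (by decide : (2 : Fin 5) ∉ ({3,4} : Finset (Fin 5))),
    Finset.sum_insert (by decide : (3 : Fin 5) ∉ ({4} : Finset (Fin 5))),
    Finset.sum_singleton]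
  simp only [show (c[1,2,3,4] : Equiv.Perm (Fin 5)) 1 = 2 from by decide,
    show (c[1,2,3,4] : Equiv.Perm (Fin 5)) 2 = 3 from by decide,
    show (c[1,2,3,4] : Equiv.Perm (Fin 5)) 3 = 4 from by decide,
    show (c[1,2,3,4] : Equiv.Perm (Fin 5)) 4 = 1 from by decide,
    show (c[1,2,4,3] : Equiv.Perm (Fin 5)) 1 = 2 from by decide,
    show (c[1,2,4,3] : Equiv.Perm (Fin 5)) 2 = 4 from by decide,
    show (c[1,2,4,3] : Equiv.Perm (Fin 5)) 4 = 3 from by decide,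
    show (c[1,2,4,3] : Equiv.Perm (Fin 5)) 3 = 1 from by decide,
    show (c[1,3,2,4] : Equiv.Perm (Fin 5)) 1 = 3 from by decide,
    show (c[1,3,2,4] : Equiv.Perm (Fin 5)) 3 = 2 from by decide,
    show (c[1,3,2,4] : Equiv.Perm (Fin 5)) 2 = 4 from by decide,
    show (c[1,3,2,4] : Equiv.Perm (Fin 5)) 4 = 1 from by decide,
    show (c[1,3,4,2] : Equiv.Perm (Fin 5)) 1 = 3 from by decide,
    show (c[1,3,4,2] : Equiv.Perm (Fin 5)) 3 = 4 from by decide,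
    show (c[1,3,4,2] : Equiv.Perm (Fin 5)) 4 = 2 from by decide,
    show (c[1,3,4,2] : Equiv.Perm (Fin 5)) 2 = 1 from by decide,
    show (c[1,4,2,3] : Equiv.Perm (Fin 5)) 1 = 4 from by decide,
    show (c[1,4,2,3] : Equiv.Perm (Fin 5)) 4 = 2 from by decide,
    show (c[1,4,2,3] : Equiv.Perm (Fin 5)) 2 = 3 from by decide,
    show (c[1,4,2,3] : Equiv.Perm (Fin 5)) 3 = 1 from by decide,
    show (c[1,4,3,2] : Equiv.Perm (Fin 5)) 1 = 4 from by decide,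
    show (c[1,4,3,2] : Equiv.Perm (Fin 5)) 4 = 3 from by decide,
    show (c[1,4,3,2] : Equiv.Perm (Fin 5)) 3 = 2 from by decide,
    show (c[1,4,3,2] : Equiv.Perm (Fin 5)) 2 = 1 from by decide]
  simp only [Finset.coe_insert, Finset.coe_singleton, Set.pair_comm]
  ring_nf

set_option maxRecDepth 40000 in
set_option maxHeartbeats 1000000 in
lemma key_case_1 (X : Set (Fin 5) → ℚ) (v : ℚ) :
    (∑ᶠ σ ∈ {σ : Equiv.Perm (Fin 5) | σ.support = ({(1:Fin 5)}ᶜ : Finset (Fin 5)) ∧ σ * σ ≠ 1},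
      (1 - ((∑ᶠ c ∈ ({(1:Fin 5)}ᶜ : Set (Fin 5)), X {c, σ c}) - 2*v + v)/2)) / 2
    = 3 + 3*v/2 - ∑ᶠ P ∈ {P : Finset (Fin 5) | P.card = 2 ∧ (1:Fin 5) ∉ P}, X ↑P := by
  have hC : {σ : Equiv.Perm (Fin 5) | σ.support = ({(1:Fin 5)}ᶜ : Finset (Fin 5)) ∧ σ * σ ≠ 1}
      = ↑({c[0,2,3,4], c[0,2,4,3], c[0,3,2,4], c[0,3,4,2], c[0,4,2,3], c[0,4,3,2]} : Finset (Equiv.Perm (Fin 5))) := by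
    ext σ
    simp only [Set.mem_setOf_eq, Finset.mem_coe]
    revert σ
    decide
  have hF : ({(1:Fin 5)}ᶜ : Set (Fin 5)) = ↑({0,2,3,4} : Finset (Fin 5)) := by
    ext x
    simp only [Set.mem_compl_iff, Set.mem_singleton_iff, Finset.coe_insert,
      Set.mem_insert_iff, Finset.coe_singleton]
    revert x
    decide
  have hPs : {P : Finset (Fin 5) | P.card = 2 ∧ (1:Fin 5) ∉ P}
      = ↑({{0,2}, {0,3}, {0,4}, {2,3}, {2,4}, {3,4}} : Finset (Finset (Fin 5))) := by
    ext P
    simp only [Set.mem_setOf_eq, Finset.mem_coe]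
    revert P
    decide
  rw [hC, hPs, finsum_mem_coe_finset, finsum_mem_coe_finset]
  simp only [hF, finsum_mem_coe_finset]
  rw [Finset.sum_insert (by decide : (c[0,2,3,4] : Equiv.Perm (Fin 5)) ∉ ({c[0,2,4,3], c[0,3,2,4], c[0,3,4,2], c[0,4,2,3], c[0,4,3,2]} : Finset (Equiv.Perm (Fin 5)))),
    Finset.sum_insert (by decide : (c[0,2,4,3] : Equiv.Perm (Fin 5)) ∉ ({c[0,3,2,4], c[0,3,4,2], c[0,4,2,3], c[0,4,3,2]} : Finset (Equiv.Perm (Fin 5)))),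
    Finset.sum_insert (by decide : (c[0,3,2,4] : Equiv.Perm (Fin 5)) ∉ ({c[0,3,4,2], c[0,4,2,3], c[0,4,3,2]} : Finset (Equiv.Perm (Fin 5)))),
    Finset.sum_insert (by decide : (c[0,3,4,2] : Equiv.Perm (Fin 5)) ∉ ({c[0,4,2,3], c[0,4,3,2]} : Finset (Equiv.Perm (Fin 5)))),
    Finset.sum_insert (by decide : (c[0,4,2,3] : Equiv.Perm (Fin 5)) ∉ ({c[0,4,3,2]} : Finset (Equiv.Perm (Fin 5)))),
    Finset.sum_singleton]
  rw [Finset.sum_insert (by decide : ({0,2} : Finset (Fin 5)) ∉ ({{0,3}, {0,4}, {2,3}, {2,4}, {3,4}} : Finset (Finset (Fin 5)))),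
    Finset.sum_insert (by decide : ({0,3} : Finset (Fin 5)) ∉ ({{0,4}, {2,3}, {2,4}, {3,4}} : Finset (Finset (Fin 5)))),
    Finset.sum_insert (by decide : ({0,4} : Finset (Fin 5)) ∉ ({{2,3}, {2,4}, {3,4}} : Finset (Finset (Fin 5)))),
    Finset.sum_insert (by decide : ({2,3} : Finset (Fin 5)) ∉ ({{2,4}, {3,4}} : Finset (Finset (Fin 5)))),
    Finset.sum_insert (by decide : ({2,4} : Finset (Fin 5)) ∉ ({{3,4}} : Finset (Finset (Fin 5)))),
    Finset.sum_singleton]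
  simp only [Finset.sum_insert (by decide : (0 : Fin 5) ∉ ({2,3,4} : Finset (Fin 5))),
    Finset.sum_insert (by decide : (2 : Fin 5) ∉ ({3,4} : Finset (Fin 5))),
    Finset.sum_insert (by decide : (3 : Fin 5) ∉ ({4} : Finset (Fin 5))),
    Finset.sum_singleton]
  simp only [show (c[0,2,3,4] : Equiv.Perm (Fin 5)) 0 = 2 from by decide,
    show (c[0,2,3,4] : Equiv.Perm (Fin 5)) 2 = 3 from by decide,
    show (c[0,2,3,4] : Equiv.Perm (Fin 5)) 3 = 4 from by decide,
    show (c[0,2,3,4] : Equiv.Perm (Fin 5)) 4 = 0 from by decide,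
    show (c[0,2,4,3] : Equiv.Perm (Fin 5)) 0 = 2 from by decide,
    show (c[0,2,4,3] : Equiv.Perm (Fin 5)) 2 = 4 from by decide,
    show (c[0,2,4,3] : Equiv.Perm (Fin 5)) 4 = 3 from by decide,
    show (c[0,2,4,3] : Equiv.Perm (Fin 5)) 3 = 0 from by decide,
    show (c[0,3,2,4] : Equiv.Perm (Fin 5)) 0 = 3 from by decide,
    show (c[0,3,2,4] : Equiv.Perm (Fin 5)) 3 = 2 from by decide,
    show (c[0,3,2,4] : Equiv.Perm (Fin 5)) 2 = 4 from by decide,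
    show (c[0,3,2,4] : Equiv.Perm (Fin 5)) 4 = 0 from by decide,
    show (c[0,3,4,2] : Equiv.Perm (Fin 5)) 0 = 3 from by decide,
    show (c[0,3,4,2] : Equiv.Perm (Fin 5)) 3 = 4 from by decide,
    show (c[0,3,4,2] : Equiv.Perm (Fin 5)) 4 = 2 from by decide,
    show (c[0,3,4,2] : Equiv.Perm (Fin 5)) 2 = 0 from by decide,
    show (c[0,4,2,3] : Equiv.Perm (Fin 5)) 0 = 4 from by decide,
    show (c[0,4,2,3] : Equiv.Perm (Fin 5)) 4 = 2 from by decide,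
    show (c[0,4,2,3] : Equiv.Perm (Fin 5)) 2 = 3 from by decide,
    show (c[0,4,2,3] : Equiv.Perm (Fin 5)) 3 = 0 from by decide,
    show (c[0,4,3,2] : Equiv.Perm (Fin 5)) 0 = 4 from by decide,
    show (c[0,4,3,2] : Equiv.Perm (Fin 5)) 4 = 3 from by decide,
    show (c[0,4,3,2] : Equiv.Perm (Fin 5)) 3 = 2 from by decide,
    show (c[0,4,3,2] : Equiv.Perm (Fin 5)) 2 = 0 from by decide]
  simp only [Finset.coe_insert, Finset.coe_singleton, Set.pair_comm]
  ring_nf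

set_option maxRecDepth 40000 in
set_option maxHeartbeats 1000000 in
lemma key_case_2 (X : Set (Fin 5) → ℚ) (v : ℚ) :
    (∑ᶠ σ ∈ {σ : Equiv.Perm (Fin 5) | σ.support = ({(2:Fin 5)}ᶜ : Finset (Fin 5)) ∧ σ * σ ≠ 1},
      (1 - ((∑ᶠ c ∈ ({(2:Fin 5)}ᶜ : Set (Fin 5)), X {c, σ c}) - 2*v + v)/2)) / 2
    = 3 + 3*v/2 - ∑ᶠ P ∈ {P : Finset (Fin 5) | P.card = 2 ∧ (2:Fin 5) ∉ P}, X ↑P := by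
  have hC : {σ : Equiv.Perm (Fin 5) | σ.support = ({(2:Fin 5)}ᶜ : Finset (Fin 5)) ∧ σ * σ ≠ 1}
      = ↑({c[0,1,3,4], c[0,1,4,3], c[0,3,1,4], c[0,3,4,1], c[0,4,1,3], c[0,4,3,1]} : Finset (Equiv.Perm (Fin 5))) := by
    ext σ
    simp only [Set.mem_setOf_eq, Finset.mem_coe]
    revert σ
    decide
  have hF : ({(2:Fin 5)}ᶜ : Set (Fin 5)) = ↑({0,1,3,4} : Finset (Fin 5)) := by
    ext x
    simp only [Set.mem_compl_iff, Set.mem_singleton_iff, Finset.coe_insert,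
      Set.mem_insert_iff, Finset.coe_singleton]
    revert x
    decide
  have hPs : {P : Finset (Fin 5) | P.card = 2 ∧ (2:Fin 5) ∉ P}
      = ↑({{0,1}, {0,3}, {0,4}, {1,3}, {1,4}, {3,4}} : Finset (Finset (Fin 5))) := by
    ext P
    simp only [Set.mem_setOf_eq, Finset.mem_coe]
    revert P
    decide
  rw [hC, hPs, finsum_mem_coe_finset, finsum_mem_coe_finset]
  simp only [hF, finsum_mem_coe_finset]
  rw [Finset.sum_insert (by decide : (c[0,1,3,4] : Equiv.Perm (Fin 5)) ∉ ({c[0,1,4,3], c[0,3,1,4], c[0,3,4,1], c[0,4,1,3], c[0,4,3,1]} : Finset (Equiv.Perm (Fin 5)))),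
    Finset.sum_insert (by decide : (c[0,1,4,3] : Equiv.Perm (Fin 5)) ∉ ({c[0,3,1,4], c[0,3,4,1], c[0,4,1,3], c[0,4,3,1]} : Finset (Equiv.Perm (Fin 5)))),
    Finset.sum_insert (by decide : (c[0,3,1,4] : Equiv.Perm (Fin 5)) ∉ ({c[0,3,4,1], c[0,4,1,3], c[0,4,3,1]} : Finset (Equiv.Perm (Fin 5)))),
    Finset.sum_insert (by decide : (c[0,3,4,1] : Equiv.Perm (Fin 5)) ∉ ({c[0,4,1,3], c[0,4,3,1]} : Finset (Equiv.Perm (Fin 5)))),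
    Finset.sum_insert (by decide : (c[0,4,1,3] : Equiv.Perm (Fin 5)) ∉ ({c[0,4,3,1]} : Finset (Equiv.Perm (Fin 5)))),
    Finset.sum_singleton]
  rw [Finset.sum_insert (by decide : ({0,1} : Finset (Fin 5)) ∉ ({{0,3}, {0,4}, {1,3}, {1,4}, {3,4}} : Finset (Finset (Fin 5)))),
    Finset.sum_insert (by decide : ({0,3} : Finset (Fin 5)) ∉ ({{0,4}, {1,3}, {1,4}, {3,4}} : Finset (Finset (Fin 5)))),
    Finset.sum_insert (by decide : ({0,4} : Finset (Fin 5)) ∉ ({{1,3}, {1,4}, {3,4}} : Finset (Finset (Fin 5)))),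
    Finset.sum_insert (by decide : ({1,3} : Finset (Fin 5)) ∉ ({{1,4}, {3,4}} : Finset (Finset (Fin 5)))),
    Finset.sum_insert (by decide : ({1,4} : Finset (Fin 5)) ∉ ({{3,4}} : Finset (Finset (Fin 5)))),
    Finset.sum_singleton]
  simp only [Finset.sum_insert (by decide : (0 : Fin 5) ∉ ({1,3,4} : Finset (Fin 5))),
    Finset.sum_insert (by decide : (1 : Fin 5) ∉ ({3,4} : Finset (Fin 5))),
    Finset.sum_insert (by decide : (3 : Fin 5) ∉ ({4} : Finset (Fin 5))),
    Finset.sum_singleton]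
  simp only [show (c[0,1,3,4] : Equiv.Perm (Fin 5)) 0 = 1 from by decide,
    show (c[0,1,3,4] : Equiv.Perm (Fin 5)) 1 = 3 from by decide,
    show (c[0,1,3,4] : Equiv.Perm (Fin 5)) 3 = 4 from by decide,
    show (c[0,1,3,4] : Equiv.Perm (Fin 5)) 4 = 0 from by decide,
    show (c[0,1,4,3] : Equiv.Perm (Fin 5)) 0 = 1 from by decide,
    show (c[0,1,4,3] : Equiv.Perm (Fin 5)) 1 = 4 from by decide,
    show (c[0,1,4,3] : Equiv.Perm (Fin 5)) 4 = 3 from by decide,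
    show (c[0,1,4,3] : Equiv.Perm (Fin 5)) 3 = 0 from by decide,
    show (c[0,3,1,4] : Equiv.Perm (Fin 5)) 0 = 3 from by decide,
    show (c[0,3,1,4] : Equiv.Perm (Fin 5)) 3 = 1 from by decide,
    show (c[0,3,1,4] : Equiv.Perm (Fin 5)) 1 = 4 from by decide,
    show (c[0,3,1,4] : Equiv.Perm (Fin 5)) 4 = 0 from by decide,
    show (c[0,3,4,1] : Equiv.Perm (Fin 5)) 0 = 3 from by decide,
    show (c[0,3,4,1] : Equiv.Perm (Fin 5)) 3 = 4 from by decide,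
    show (c[0,3,4,1] : Equiv.Perm (Fin 5)) 4 = 1 from by decide,
    show (c[0,3,4,1] : Equiv.Perm (Fin 5)) 1 = 0 from by decide,
    show (c[0,4,1,3] : Equiv.Perm (Fin 5)) 0 = 4 from by decide,
    show (c[0,4,1,3] : Equiv.Perm (Fin 5)) 4 = 1 from by decide,
    show (c[0,4,1,3] : Equiv.Perm (Fin 5)) 1 = 3 from by decide,
    show (c[0,4,1,3] : Equiv.Perm (Fin 5)) 3 = 0 from by decide,
    show (c[0,4,3,1] : Equiv.Perm (Fin 5)) 0 = 4 from by decide,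
    show (c[0,4,3,1] : Equiv.Perm (Fin 5)) 4 = 3 from by decide,
    show (c[0,4,3,1] : Equiv.Perm (Fin 5)) 3 = 1 from by decide,
    show (c[0,4,3,1] : Equiv.Perm (Fin 5)) 1 = 0 from by decide]
  simp only [Finset.coe_insert, Finset.coe_singleton, Set.pair_comm]
  ring_nf

set_option maxRecDepth 40000 in
set_option maxHeartbeats 1000000 in
lemma key_case_3 (X : Set (Fin 5) → ℚ) (v : ℚ) :
    (∑ᶠ σ ∈ {σ : Equiv.Perm (Fin 5) | σ.support = ({(3:Fin 5)}ᶜ : Finset (Fin 5)) ∧ σ * σ ≠ 1},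
      (1 - ((∑ᶠ c ∈ ({(3:Fin 5)}ᶜ : Set (Fin 5)), X {c, σ c}) - 2*v + v)/2)) / 2
    = 3 + 3*v/2 - ∑ᶠ P ∈ {P : Finset (Fin 5) | P.card = 2 ∧ (3:Fin 5) ∉ P}, X ↑P := by
  have hC : {σ : Equiv.Perm (Fin 5) | σ.support = ({(3:Fin 5)}ᶜ : Finset (Fin 5)) ∧ σ * σ ≠ 1}
      = ↑({c[0,1,2,4], c[0,1,4,2], c[0,2,1,4], c[0,2,4,1], c[0,4,1,2], c[0,4,2,1]} : Finset (Equiv.Perm (Fin 5))) := by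
    ext σ
    simp only [Set.mem_setOf_eq, Finset.mem_coe]
    revert σ
    decide
  have hF : ({(3:Fin 5)}ᶜ : Set (Fin 5)) = ↑({0,1,2,4} : Finset (Fin 5)) := by
    ext x
    simp only [Set.mem_compl_iff, Set.mem_singleton_iff, Finset.coe_insert,
      Set.mem_insert_iff, Finset.coe_singleton]
    revert x
    decide
  have hPs : {P : Finset (Fin 5) | P.card = 2 ∧ (3:Fin 5) ∉ P}
      = ↑({{0,1}, {0,2}, {0,4}, {1,2}, {1,4}, {2,4}} : Finset (Finset (Fin 5))) := by
    ext P
    simp only [Set.mem_setOf_eq, Finset.mem_coe]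
    revert P
    decide
  rw [hC, hPs, finsum_mem_coe_finset, finsum_mem_coe_finset]
  simp only [hF, finsum_mem_coe_finset]
  rw [Finset.sum_insert (by decide : (c[0,1,2,4] : Equiv.Perm (Fin 5)) ∉ ({c[0,1,4,2], c[0,2,1,4], c[0,2,4,1], c[0,4,1,2], c[0,4,2,1]} : Finset (Equiv.Perm (Fin 5)))),
    Finset.sum_insert (by decide : (c[0,1,4,2] : Equiv.Perm (Fin 5)) ∉ ({c[0,2,1,4], c[0,2,4,1], c[0,4,1,2], c[0,4,2,1]} : Finset (Equiv.Perm (Fin 5)))),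
    Finset.sum_insert (by decide : (c[0,2,1,4] : Equiv.Perm (Fin 5)) ∉ ({c[0,2,4,1], c[0,4,1,2], c[0,4,2,1]} : Finset (Equiv.Perm (Fin 5)))),
    Finset.sum_insert (by decide : (c[0,2,4,1] : Equiv.Perm (Fin 5)) ∉ ({c[0,4,1,2], c[0,4,2,1]} : Finset (Equiv.Perm (Fin 5)))),
    Finset.sum_insert (by decide : (c[0,4,1,2] : Equiv.Perm (Fin 5)) ∉ ({c[0,4,2,1]} : Finset (Equiv.Perm (Fin 5)))),
    Finset.sum_singleton]
  rw [Finset.sum_insert (by decide : ({0,1} : Finset (Fin 5)) ∉ ({{0,2}, {0,4}, {1,2}, {1,4}, {2,4}} : Finset (Finset (Fin 5)))),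
    Finset.sum_insert (by decide : ({0,2} : Finset (Fin 5)) ∉ ({{0,4}, {1,2}, {1,4}, {2,4}} : Finset (Finset (Fin 5)))),
    Finset.sum_insert (by decide : ({0,4} : Finset (Fin 5)) ∉ ({{1,2}, {1,4}, {2,4}} : Finset (Finset (Fin 5)))),
    Finset.sum_insert (by decide : ({1,2} : Finset (Fin 5)) ∉ ({{1,4}, {2,4}} : Finset (Finset (Fin 5)))),
    Finset.sum_insert (by decide : ({1,4} : Finset (Fin 5)) ∉ ({{2,4}} : Finset (Finset (Fin 5)))),
    Finset.sum_singleton]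
  simp only [Finset.sum_insert (by decide : (0 : Fin 5) ∉ ({1,2,4} : Finset (Fin 5))),
    Finset.sum_insert (by decide : (1 : Fin 5) ∉ ({2,4} : Finset (Fin 5))),
    Finset.sum_insert (by decide : (2 : Fin 5) ∉ ({4} : Finset (Fin 5))),
    Finset.sum_singleton]
  simp only [show (c[0,1,2,4] : Equiv.Perm (Fin 5)) 0 = 1 from by decide,
    show (c[0,1,2,4] : Equiv.Perm (Fin 5)) 1 = 2 from by decide,
    show (c[0,1,2,4] : Equiv.Perm (Fin 5)) 2 = 4 from by decide,
    show (c[0,1,2,4] : Equiv.Perm (Fin 5)) 4 = 0 from by decide,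
    show (c[0,1,4,2] : Equiv.Perm (Fin 5)) 0 = 1 from by decide,
    show (c[0,1,4,2] : Equiv.Perm (Fin 5)) 1 = 4 from by decide,
    show (c[0,1,4,2] : Equiv.Perm (Fin 5)) 4 = 2 from by decide,
    show (c[0,1,4,2] : Equiv.Perm (Fin 5)) 2 = 0 from by decide,
    show (c[0,2,1,4] : Equiv.Perm (Fin 5)) 0 = 2 from by decide,
    show (c[0,2,1,4] : Equiv.Perm (Fin 5)) 2 = 1 from by decide,
    show (c[0,2,1,4] : Equiv.Perm (Fin 5)) 1 = 4 from by decide,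
    show (c[0,2,1,4] : Equiv.Perm (Fin 5)) 4 = 0 from by decide,
    show (c[0,2,4,1] : Equiv.Perm (Fin 5)) 0 = 2 from by decide,
    show (c[0,2,4,1] : Equiv.Perm (Fin 5)) 2 = 4 from by decide,
    show (c[0,2,4,1] : Equiv.Perm (Fin 5)) 4 = 1 from by decide,
    show (c[0,2,4,1] : Equiv.Perm (Fin 5)) 1 = 0 from by decide,
    show (c[0,4,1,2] : Equiv.Perm (Fin 5)) 0 = 4 from by decide,
    show (c[0,4,1,2] : Equiv.Perm (Fin 5)) 4 = 1 from by decide,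
    show (c[0,4,1,2] : Equiv.Perm (Fin 5)) 1 = 2 from by decide,
    show (c[0,4,1,2] : Equiv.Perm (Fin 5)) 2 = 0 from by decide,
    show (c[0,4,2,1] : Equiv.Perm (Fin 5)) 0 = 4 from by decide,
    show (c[0,4,2,1] : Equiv.Perm (Fin 5)) 4 = 2 from by decide,
    show (c[0,4,2,1] : Equiv.Perm (Fin 5)) 2 = 1 from by decide,
    show (c[0,4,2,1] : Equiv.Perm (Fin 5)) 1 = 0 from by decide]
  simp only [Finset.coe_insert, Finset.coe_singleton, Set.pair_comm]
  ring_nf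

set_option maxRecDepth 40000 in
set_option maxHeartbeats 1000000 in
lemma key_case_4 (X : Set (Fin 5) → ℚ) (v : ℚ) :
    (∑ᶠ σ ∈ {σ : Equiv.Perm (Fin 5) | σ.support = ({(4:Fin 5)}ᶜ : Finset (Fin 5)) ∧ σ * σ ≠ 1},
      (1 - ((∑ᶠ c ∈ ({(4:Fin 5)}ᶜ : Set (Fin 5)), X {c, σ c}) - 2*v + v)/2)) / 2
    = 3 + 3*v/2 - ∑ᶠ P ∈ {P : Finset (Fin 5) | P.card = 2 ∧ (4:Fin 5) ∉ P}, X ↑P := by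
  have hC : {σ : Equiv.Perm (Fin 5) | σ.support = ({(4:Fin 5)}ᶜ : Finset (Fin 5)) ∧ σ * σ ≠ 1}
      = ↑({c[0,1,2,3], c[0,1,3,2], c[0,2,1,3], c[0,2,3,1], c[0,3,1,2], c[0,3,2,1]} : Finset (Equiv.Perm (Fin 5))) := by
    ext σ
    simp only [Set.mem_setOf_eq, Finset.mem_coe]
    revert σ
    decide
  have hF : ({(4:Fin 5)}ᶜ : Set (Fin 5)) = ↑({0,1,2,3} : Finset (Fin 5)) := by
    ext x
    simp only [Set.mem_compl_iff, Set.mem_singleton_iff, Finset.coe_insert,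
      Set.mem_insert_iff, Finset.coe_singleton]
    revert x
    decide
  have hPs : {P : Finset (Fin 5) | P.card = 2 ∧ (4:Fin 5) ∉ P}
      = ↑({{0,1}, {0,2}, {0,3}, {1,2}, {1,3}, {2,3}} : Finset (Finset (Fin 5))) := by
    ext P
    simp only [Set.mem_setOf_eq, Finset.mem_coe]
    revert P
    decide
  rw [hC, hPs, finsum_mem_coe_finset, finsum_mem_coe_finset]
  simp only [hF, finsum_mem_coe_finset]
  rw [Finset.sum_insert (by decide : (c[0,1,2,3] : Equiv.Perm (Fin 5)) ∉ ({c[0,1,3,2], c[0,2,1,3], c[0,2,3,1], c[0,3,1,2], c[0,3,2,1]} : Finset (Equiv.Perm (Fin 5)))),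
    Finset.sum_insert (by decide : (c[0,1,3,2] : Equiv.Perm (Fin 5)) ∉ ({c[0,2,1,3], c[0,2,3,1], c[0,3,1,2], c[0,3,2,1]} : Finset (Equiv.Perm (Fin 5)))),
    Finset.sum_insert (by decide : (c[0,2,1,3] : Equiv.Perm (Fin 5)) ∉ ({c[0,2,3,1], c[0,3,1,2], c[0,3,2,1]} : Finset (Equiv.Perm (Fin 5)))),
    Finset.sum_insert (by decide : (c[0,2,3,1] : Equiv.Perm (Fin 5)) ∉ ({c[0,3,1,2], c[0,3,2,1]} : Finset (Equiv.Perm (Fin 5)))),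
    Finset.sum_insert (by decide : (c[0,3,1,2] : Equiv.Perm (Fin 5)) ∉ ({c[0,3,2,1]} : Finset (Equiv.Perm (Fin 5)))),
    Finset.sum_singleton]
  rw [Finset.sum_insert (by decide : ({0,1} : Finset (Fin 5)) ∉ ({{0,2}, {0,3}, {1,2}, {1,3}, {2,3}} : Finset (Finset (Fin 5)))),
    Finset.sum_insert (by decide : ({0,2} : Finset (Fin 5)) ∉ ({{0,3}, {1,2}, {1,3}, {2,3}} : Finset (Finset (Fin 5)))),
    Finset.sum_insert (by decide : ({0,3} : Finset (Fin 5)) ∉ ({{1,2}, {1,3}, {2,3}} : Finset (Finset (Fin 5)))),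
    Finset.sum_insert (by decide : ({1,2} : Finset (Fin 5)) ∉ ({{1,3}, {2,3}} : Finset (Finset (Fin 5)))),
    Finset.sum_insert (by decide : ({1,3} : Finset (Fin 5)) ∉ ({{2,3}} : Finset (Finset (Fin 5)))),
    Finset.sum_singleton]
  simp only [Finset.sum_insert (by decide : (0 : Fin 5) ∉ ({1,2,3} : Finset (Fin 5))),
    Finset.sum_insert (by decide : (1 : Fin 5) ∉ ({2,3} : Finset (Fin 5))),
    Finset.sum_insert (by decide : (2 : Fin 5) ∉ ({3} : Finset (Fin 5))),
    Finset.sum_singleton]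
  simp only [show (c[0,1,2,3] : Equiv.Perm (Fin 5)) 0 = 1 from by decide,
    show (c[0,1,2,3] : Equiv.Perm (Fin 5)) 1 = 2 from by decide,
    show (c[0,1,2,3] : Equiv.Perm (Fin 5)) 2 = 3 from by decide,
    show (c[0,1,2,3] : Equiv.Perm (Fin 5)) 3 = 0 from by decide,
    show (c[0,1,3,2] : Equiv.Perm (Fin 5)) 0 = 1 from by decide,
    show (c[0,1,3,2] : Equiv.Perm (Fin 5)) 1 = 3 from by decide,
    show (c[0,1,3,2] : Equiv.Perm (Fin 5)) 3 = 2 from by decide,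
    show (c[0,1,3,2] : Equiv.Perm (Fin 5)) 2 = 0 from by decide,
    show (c[0,2,1,3] : Equiv.Perm (Fin 5)) 0 = 2 from by decide,
    show (c[0,2,1,3] : Equiv.Perm (Fin 5)) 2 = 1 from by decide,
    show (c[0,2,1,3] : Equiv.Perm (Fin 5)) 1 = 3 from by decide,
    show (c[0,2,1,3] : Equiv.Perm (Fin 5)) 3 = 0 from by decide,
    show (c[0,2,3,1] : Equiv.Perm (Fin 5)) 0 = 2 from by decide,
    show (c[0,2,3,1] : Equiv.Perm (Fin 5)) 2 = 3 from by decide,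
    show (c[0,2,3,1] : Equiv.Perm (Fin 5)) 3 = 1 from by decide,
    show (c[0,2,3,1] : Equiv.Perm (Fin 5)) 1 = 0 from by decide,
    show (c[0,3,1,2] : Equiv.Perm (Fin 5)) 0 = 3 from by decide,
    show (c[0,3,1,2] : Equiv.Perm (Fin 5)) 3 = 1 from by decide,
    show (c[0,3,1,2] : Equiv.Perm (Fin 5)) 1 = 2 from by decide,
    show (c[0,3,1,2] : Equiv.Perm (Fin 5)) 2 = 0 from by decide,
    show (c[0,3,2,1] : Equiv.Perm (Fin 5)) 0 = 3 from by decide,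
    show (c[0,3,2,1] : Equiv.Perm (Fin 5)) 3 = 2 from by decide,
    show (c[0,3,2,1] : Equiv.Perm (Fin 5)) 2 = 1 from by decide,
    show (c[0,3,2,1] : Equiv.Perm (Fin 5)) 1 = 0 from by decide]
  simp only [Finset.coe_insert, Finset.coe_singleton, Set.pair_comm]
  ring_nf

lemma key_cycle_sum (ℓ : Fin 5) (X : Set (Fin 5) → ℚ) (v : ℚ) :
    (∑ᶠ σ ∈ {σ : Equiv.Perm (Fin 5) | σ.IsCycle ∧ σ.support = ({ℓ}ᶜ : Finset (Fin 5))},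
      (1 - ((∑ᶠ c ∈ ({ℓ}ᶜ : Set (Fin 5)), X {c, σ c}) - 2*v + v)/2)) / 2
    = 3 + 3*v/2 - ∑ᶠ P ∈ {P : Finset (Fin 5) | P.card = 2 ∧ ℓ ∉ P}, X ↑P := by
  have hcard : (({ℓ}ᶜ : Finset (Fin 5))).card = 4 := by
    rw [Finset.card_compl, Finset.card_singleton]
    rfl
  have hset : {σ : Equiv.Perm (Fin 5) | σ.IsCycle ∧ σ.support = ({ℓ}ᶜ : Finset (Fin 5))}
      = {σ : Equiv.Perm (Fin 5) | σ.support = ({ℓ}ᶜ : Finset (Fin 5)) ∧ σ * σ ≠ 1} := by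
    ext σ
    simp only [Set.mem_setOf_eq]
    constructor
    · rintro ⟨hc, hs⟩
      exact ⟨hs, (isCycle_iff_sq σ (by rw [hs]; exact hcard)).mp hc⟩
    · rintro ⟨hs, h2⟩
      exact ⟨(isCycle_iff_sq σ (by rw [hs]; exact hcard)).mpr h2, hs⟩
  rw [hset]
  fin_cases ℓ
  · exact key_case_0 X v
  · exact key_case_1 X v
  · exact key_case_2 X v
  · exact key_case_3 X v
  · exact key_case_4 X v

namespace ColouredGraph

variable {k : ℕ}

lemma two_mul_linesIn (G : ColouredGraph k) (S : Set (Fin k)) (b : G.Component S) :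
    2 * G.linesIn S b = Nat.card {c : Fin k // c ∈ S} * G.nodesIn S b := by
  classical
  set D := {x : G.V × Fin k // x.2 ∈ S ∧ Quot.mk (G.Reach S) x.1 = b} with hD
  set r := fun p q : D =>
    p.1.2 = q.1.2 ∧ (q.1.1 = p.1.1 ∨ q.1.1 = G.adj p.1.2 p.1.1) with hrdef
  have hequiv : Equivalence r := by
    constructor
    · intro p; exact ⟨rfl, Or.inl rfl⟩
    · rintro p q ⟨hc, (h | h)⟩
      · exact ⟨hc.symm, Or.inl h.symm⟩
      · refine ⟨hc.symm, Or.inr ?_⟩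
        rw [← hc, h, G.adj_invol]
    · rintro p q s ⟨hc1, (h1 | h1)⟩ ⟨hc2, (h2 | h2)⟩
      · exact ⟨hc1.trans hc2, Or.inl (h2.trans h1)⟩
      · refine ⟨hc1.trans hc2, Or.inr ?_⟩
        rw [h2, h1, hc1]
      · exact ⟨hc1.trans hc2, Or.inr (h2.trans h1)⟩
      · refine ⟨hc1.trans hc2, Or.inl ?_⟩
        rw [h2, h1, hc1, G.adj_invol]
  have hmk : ∀ p q : D, (Quot.mk r p = Quot.mk r q) ↔ r p q := by
    intro p q
    rw [Quot.eq]
    exact ⟨fun h => (Equivalence.eqvGen_iff hequiv).mp h,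
      fun h => Relation.EqvGen.rel _ _ h⟩
  have hfb : Function.Bijective (fun p : D => ((Quot.mk r p : G.LineIn S b), G.sign p.1.1)) := by
    constructor
    · intro p q h
      have h1 : Quot.mk r p = Quot.mk r q := congrArg Prod.fst h
      have h2 : G.sign p.1.1 = G.sign q.1.1 := congrArg Prod.snd h
      obtain ⟨hc, (hor | hor)⟩ := (hmk p q).mp h1
      · apply Subtype.ext
        apply Prod.ext hor.symm hc
      · exfalso
        rw [hor, G.adj_sign] at h2
        simp at h2
    · rintro ⟨l, s⟩
      obtain ⟨p, hp⟩ := Quot.exists_rep l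
      by_cases hs : G.sign p.1.1 = s
      · exact ⟨p, Prod.ext hp hs⟩
      · have hmem : Quot.mk (G.Reach S) (G.adj p.1.2 p.1.1) = b := by
          have hstep : G.Step S p.1.1 (G.adj p.1.2 p.1.1) := ⟨p.1.2, p.2.1, rfl⟩
          have := Quot.sound (Relation.ReflTransGen.single hstep :
            G.Reach S p.1.1 (G.adj p.1.2 p.1.1))
          exact this.symm.trans p.2.2
        refine ⟨⟨(G.adj p.1.2 p.1.1, p.1.2), ⟨p.2.1, hmem⟩⟩, Prod.ext ?_ ?_⟩
        · have : Quot.mk r p = Quot.mk r ⟨(G.adj p.1.2 p.1.1, p.1.2), ⟨p.2.1, hmem⟩⟩ :=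
            Quot.sound ⟨rfl, Or.inr rfl⟩
          exact this.symm.trans hp
        · show G.sign (G.adj p.1.2 p.1.1) = s
          rw [G.adj_sign]
          cases hb : G.sign p.1.1 <;> cases s <;> simp_all
  have e2 : D ≃ {v : G.V // Quot.mk (G.Reach S) v = b} × {c : Fin k // c ∈ S} :=
    { toFun := fun p => (⟨p.1.1, p.2.2⟩, ⟨p.1.2, p.2.1⟩)
      invFun := fun q => ⟨(q.1.1, q.2.1), ⟨q.2.2, q.1.2⟩⟩
      left_inv := by rintro ⟨⟨v, c⟩, h⟩; rfl
      right_inv := by rintro ⟨⟨v, hv⟩, ⟨c, hc⟩⟩; rfl }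
  have hcD1 : Nat.card D = G.linesIn S b * 2 := by
    rw [Nat.card_congr (Equiv.ofBijective _ hfb), Nat.card_prod]
    have hb : Nat.card Bool = 2 := by rw [Nat.card_eq_fintype_card]; rfl
    rw [hb]
    rfl
  have hcD2 : Nat.card D = G.nodesIn S b * Nat.card {c : Fin k // c ∈ S} := by
    rw [Nat.card_congr e2, Nat.card_prod]
    rfl
  rw [mul_comm 2, ← hcD1, hcD2, mul_comm]

lemma card_colours_ne (ℓ : Fin 5) :
    Nat.card {c : Fin 5 // c ∈ ({ℓ}ᶜ : Set (Fin 5))} = 4 := by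
  have h : ∀ c : Fin 5, c ∈ ({ℓ}ᶜ : Set (Fin 5)) ↔ ¬(c = ℓ) := fun c => Iff.rfl
  rw [Nat.card_congr (Equiv.subtypeEquivRight h), Nat.card_eq_fintype_card,
    Fintype.card_subtype_compl, Fintype.card_subtype_eq]
  rfl

lemma linesIn_eq (G : ColouredGraph 5) (ℓ : Fin 5) (b : G.Component {ℓ}ᶜ) :
    G.linesIn {ℓ}ᶜ b = 2 * G.nodesIn {ℓ}ᶜ b := by
  have h := G.two_mul_linesIn {ℓ}ᶜ b
  rw [card_colours_ne] at h
  omega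

lemma sum_nodesIn (G : ColouredGraph k) (S : Set (Fin k)) :
    ∑ᶠ b : G.Component S, G.nodesIn S b = Nat.card G.V := by
  classical
  letI : Fintype (G.Component S) := Fintype.ofFinite _
  letI : ∀ b : G.Component S, Fintype {v : G.V // Quot.mk (G.Reach S) v = b} :=
    fun b => Fintype.ofFinite _
  rw [finsum_eq_sum_of_fintype]
  calc ∑ b : G.Component S, G.nodesIn S b
      = ∑ b : G.Component S, Fintype.card {v : G.V // Quot.mk (G.Reach S) v = b} :=
        Finset.sum_congr rfl (fun b _ => Nat.card_eq_fintype_card)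
    _ = Fintype.card (Σ b : G.Component S, {v : G.V // Quot.mk (G.Reach S) v = b}) :=
        Fintype.card_sigma.symm
    _ = Fintype.card G.V := Fintype.card_congr (Equiv.sigmaFiberEquiv _)
    _ = Nat.card G.V := Nat.card_eq_fintype_card.symm

lemma bubbleDegree_eq (G : ColouredGraph 5) (ℓ : Fin 5) (b : G.Component {ℓ}ᶜ) :
    G.bubbleDegree ℓ b
      = 3 + 3 * (G.nodesIn {ℓ}ᶜ b : ℚ) / 2 - (G.bubbleEdgeCount ℓ b : ℚ) := by
  have hl : (G.linesIn {ℓ}ᶜ b : ℚ) = 2 * (G.nodesIn {ℓ}ᶜ b : ℚ) := by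
    exact_mod_cast congrArg (Nat.cast : ℕ → ℚ) (G.linesIn_eq ℓ b)
  have he : (G.bubbleEdgeCount ℓ b : ℚ)
      = ∑ᶠ P ∈ {P : Finset (Fin 5) | P.card = 2 ∧ ℓ ∉ P}, (G.countIn {ℓ}ᶜ (↑P) b : ℚ) := by
    unfold ColouredGraph.bubbleEdgeCount
    exact cast_finsum_mem _ (Set.toFinite _) _
  unfold ColouredGraph.bubbleDegree ColouredGraph.bubbleJacketGenus
  simp only [hl]
  rw [he]
  exact key_cycle_sum ℓ (fun s => (G.countIn {ℓ}ᶜ s b : ℚ)) (G.nodesIn {ℓ}ᶜ b : ℚ)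

end ColouredGraph


end Aux

open ColouredGraph in
/-- for any closed 5-coloured graph `𝒢` with `𝒩` nodes and any colour `ℓ`,
the sum of the degrees of the bubbles of colour `ℓ` satisfies
`Σ_{b∈B_ℓ} ω(b) = 3|B_ℓ| + (3𝒩)/2 − Σ_{b∈B_ℓ} |E_b|`, where `E_b` is the set of edges
of the 3-dimensional complex dual to `b` (the bicoloured faces of `b`). -/
theorem sum_bubble_degrees_4d (G : ColouredGraph 5) (ℓ : Fin 5) :
    (∑ᶠ b : G.Component {ℓ}ᶜ, G.bubbleDegree ℓ b)
      = 3 * (G.numComponents {ℓ}ᶜ : ℚ) + 3 * (Nat.card G.V : ℚ) / 2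
        - ∑ᶠ b : G.Component {ℓ}ᶜ, (G.bubbleEdgeCount ℓ b : ℚ) := by
  classical
  letI : Fintype (G.Component {ℓ}ᶜ) := Fintype.ofFinite _
  have hnodes : ∑ b : G.Component {ℓ}ᶜ, G.nodesIn {ℓ}ᶜ b = Nat.card G.V := by
    have h := G.sum_nodesIn {ℓ}ᶜ
    rwa [finsum_eq_sum_of_fintype] at h
  rw [finsum_eq_sum_of_fintype, finsum_eq_sum_of_fintype]
  rw [Finset.sum_congr rfl (fun b _ => ColouredGraph.bubbleDegree_eq G ℓ b)]
  rw [Finset.sum_sub_distrib, Finset.sum_add_distrib, Finset.sum_const, Finset.card_univ]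
  have hN : (∑ b : G.Component {ℓ}ᶜ, 3 * (G.nodesIn {ℓ}ᶜ b : ℚ) / 2)
      = 3 * (Nat.card G.V : ℚ) / 2 := by
    rw [← hnodes]
    push_cast
    rw [Finset.mul_sum, Finset.sum_div]
  have hcomp : (Fintype.card (G.Component {ℓ}ᶜ)) • (3:ℚ)
      = 3 * (G.numComponents {ℓ}ᶜ : ℚ) := by
    rw [nsmul_eq_mul, mul_comm]
    congr 1
    rw [ColouredGraph.numComponents, Nat.card_eq_fintype_card]
  rw [hN, hcomp]
end
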